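/- Let f = (1/N) Σ_{i=1}^N f_i where each f_i : ℝ^d → ℝ is non-negative, differentiable, L-smooth and convex, with f_i(x) > 0 for all i and x, and assume in addition that f is μ-strongly convex with minimizer x*. Run the stochastic NGN iteration with parameter σ > 0 from initial point x⁰. Then for every k ≥ 0, E[‖x^k − x*‖²] ≤ (1 − μρ)^k ‖x⁰ − x*‖² + (6L/μ) σ (1 + σL) Δ_int + (2σL/μ) · max{0, 2σL − 1} · Δ_pos, where ρ = σ/((1 + 2σL)(1 + σL)). -/

import Mathlib

open scoped RealInnerProductSpace

lemma star (u a l b t m : ℝ) (hu : 0 < u) (ha : 0 < a) (hl : 0 ≤ l) (hb : 0 ≤ b)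
    (hab : a = b + l) (ht : 0 ≤ t) (htu : a * t ≤ u * b) (hm : 0 ≤ m) (hm2 : 2*u - 1 ≤ m) :
    a * t * ((1+2*u)*(1+u)) ≤ b * ((1+2*u)*(1+u) - 1 - t) * (1+t) + u*m*(1+t)^2*l := by
  have htle : t ≤ u := by
    have h1 : a * t ≤ u * a := by nlinarith [mul_nonneg hu.le hl]
    nlinarith
  have hml : u*(2*u-1)*(1+t)^2*l ≤ u*m*(1+t)^2*l := by
    apply mul_le_mul_of_nonneg_right _ hl
    apply mul_le_mul_of_nonneg_right _ (sq_nonneg _)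
    exact mul_le_mul_of_nonneg_left hm2 hu.le
  rcases le_or_gt (2*u) 1 with h|h
  · -- small u case: b-term alone dominates
    have hml0 : 0 ≤ u*m*(1+t)^2*l := by positivity
    have k1 : a*t*((1+2*u)*(1+u)) ≤ u*b*((1+2*u)*(1+u)) := by
      apply mul_le_mul_of_nonneg_right htu; positivity
    have k2 : u*b*((1+2*u)*(1+u)) ≤ b*(2*u+2*u^2) := by
      nlinarith [mul_nonneg (mul_nonneg hb hu.le) (sub_nonneg.2 h),
        mul_nonneg (mul_nonneg (mul_nonneg hb hu.le) hu.le) (sub_nonneg.2 h)]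
    have k3 : b*(2*u+2*u^2) ≤ b*((1+2*u)*(1+u) - 1 - t)*(1+t) := by
      nlinarith [mul_nonneg hb (mul_nonneg ht (sub_nonneg.2 htle)),
        mul_nonneg hb (sub_nonneg.2 htle), mul_nonneg (mul_nonneg hb ht) (sub_nonneg.2 h),
        mul_nonneg (mul_nonneg hb hu.le) (sub_nonneg.2 h),
        mul_nonneg (mul_nonneg hb ht) ht, mul_nonneg (mul_nonneg (mul_nonneg hb ht) ht) hu.le,
        mul_nonneg (mul_nonneg (mul_nonneg hb ht) hu.le) hu.le]
    linarith
  · -- large u: use m ≥ 2u-1 and the R-certificate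
    have hlt : l * t ≤ b * (u - t) := by nlinarith
    have hXpos : 0 ≤ (1+2*u)*(1+u)-1-2*t-t^2 := by
      nlinarith [mul_nonneg ht (sub_nonneg.2 htle)]
    rcases le_or_gt 0 (u*(2*u-1)*(1+t)^2 - t*((1+2*u)*(1+u))) with hQ|hQ
    · have e0 : b * ((1+2*u)*(1+u) - 1 - t) * (1+t) + u*(2*u-1)*(1+t)^2*l
            - a*t*((1+2*u)*(1+u))
          = b*((1+2*u)*(1+u)-1-2*t-t^2)
            + l*(u*(2*u-1)*(1+t)^2 - t*((1+2*u)*(1+u))) := by rw [hab]; ring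
      have := mul_nonneg hl hQ
      have := mul_nonneg hb hXpos
      linarith
    · have htpos : 0 < t := by
        rcases ht.lt_or_eq with h'|h'
        · exact h'
        · exfalso; rw [← h'] at hQ; nlinarith
      have hR : 0 ≤ t*((1+2*u)*(1+u)-1-2*t-t^2)
          + (u-t)*(u*(2*u-1)*(1+t)^2 - t*((1+2*u)*(1+u))) := by
        nlinarith [mul_nonneg ht (sub_nonneg.2 htle), sq_nonneg (u-t), sq_nonneg t,
          mul_nonneg (sub_nonneg.2 htle) (sub_nonneg.2 h.le), mul_nonneg ht ht,
          mul_nonneg (mul_nonneg ht ht) (sub_nonneg.2 htle),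
          mul_nonneg (mul_nonneg (sub_nonneg.2 htle) (sub_nonneg.2 h.le)) ht,
          mul_nonneg (mul_nonneg (sub_nonneg.2 htle) (sub_nonneg.2 h.le)) (sub_nonneg.2 htle)]
      have h1 : b*(u-t) * (u*(2*u-1)*(1+t)^2 - t*((1+2*u)*(1+u)))
          ≤ l*t * (u*(2*u-1)*(1+t)^2 - t*((1+2*u)*(1+u))) :=
        mul_le_mul_of_nonpos_right hlt hQ.le
      have e1 : t * (b * ((1+2*u)*(1+u) - 1 - t) * (1+t) + u*(2*u-1)*(1+t)^2*l
            - a*t*((1+2*u)*(1+u)))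
          = t*(b*((1+2*u)*(1+u)-1-2*t-t^2))
            + (l*t)*(u*(2*u-1)*(1+t)^2 - t*((1+2*u)*(1+u))) := by rw [hab]; ring
      have e2 : b * (t*((1+2*u)*(1+u)-1-2*t-t^2)
            + (u-t)*(u*(2*u-1)*(1+t)^2 - t*((1+2*u)*(1+u))))
          = t*(b*((1+2*u)*(1+u)-1-2*t-t^2))
            + (b*(u-t))*(u*(2*u-1)*(1+t)^2 - t*((1+2*u)*(1+u))) := by ring
      have key : 0 ≤ t * (b * ((1+2*u)*(1+u) - 1 - t) * (1+t) + u*(2*u-1)*(1+t)^2*l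
          - a*t*((1+2*u)*(1+u))) := by
        have h0 := mul_nonneg hb hR
        linarith
      have := (mul_nonneg_iff_of_pos_left htpos).mp key
      linarith

set_option maxHeartbeats 1000000 in
lemma core (L σ a astar l h : ℝ) (hL : 0 < L) (hσ : 0 < σ) (ha : 0 < a)
    (hl0 : 0 ≤ l) (hla : l ≤ a) (hlst : l ≤ astar) (hh : 0 ≤ h) (hsm : h ≤ 2*L*(a-l)) :
    (σ / (1 + σ / (2*a) * h))^2 * h - 2*(σ / (1 + σ / (2*a) * h))*(a - astar)
      ≤ -2*(σ/((1+2*σ*L)*(1+σ*L)))*(a - astar)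
        + 6*L*σ^2/(1+2*σ*L)*(astar - l)
        + 2*σ^2*L*(max 0 (2*σ*L-1))/((1+2*σ*L)*(1+σ*L))*l := by
  set t : ℝ := σ / (2*a) * h with hts
  set m : ℝ := max 0 (2*σ*L-1) with hms
  have hm : 0 ≤ m := le_max_left _ _
  have hm2 : 2*(σ*L) - 1 ≤ m := by rw [hms]; have := le_max_right (0:ℝ) (2*σ*L-1); linarith
  have ht0 : 0 ≤ t := by positivity
  have h1t : (0:ℝ) < 1 + t := by linarith
  have hu : 0 < σ * L := mul_pos hσ hL
  have hD : (0:ℝ) < (1+2*σ*L)*(1+σ*L) := by nlinarith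
  have hD1 : (0:ℝ) < 1+2*σ*L := by nlinarith
  have heq : h = 2*a*t/σ := by rw [hts]; field_simp
  have hconstraint : a * t ≤ (σ*L) * (a - l) := by
    have : a * t = σ * h / 2 := by rw [hts]; field_simp
    nlinarith
  have hb : (0:ℝ) ≤ a - l := by linarith
  have S := star (σ*L) a l (a-l) t m hu ha hl0 hb (by ring) ht0 hconstraint hm (by linarith)
  -- (A') part
  have hA : (σ/(1+t))^2 * h - 2*(σ/(1+t))*(a - l)
      ≤ -2*(σ/((1+2*σ*L)*(1+σ*L)))*(a - l) + 2*σ^2*L*m/((1+2*σ*L)*(1+σ*L))*l := by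
    rw [← sub_nonneg]
    have hid : -2*(σ/((1+2*σ*L)*(1+σ*L)))*(a - l) + 2*σ^2*L*m/((1+2*σ*L)*(1+σ*L))*l
        - ((σ/(1+t))^2 * h - 2*(σ/(1+t))*(a - l))
        = ((a-l) * ((1+2*(σ*L))*(1+σ*L) - 1 - t) * (1+t) + (σ*L)*m*(1+t)^2*l
            - a * t * ((1+2*(σ*L))*(1+(σ*L))))
          * (2*σ/(((1+2*σ*L)*(1+σ*L))*(1+t)^2)) := by
      rw [heq]
      field_simp
      ring
    rw [hid]
    apply mul_nonneg (by linarith) (by positivity)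
  -- (B') part
  have hB : 2*(σ/(1+t))*(astar - l)
      ≤ 2*(σ/((1+2*σ*L)*(1+σ*L)))*(astar - l) + 6*L*σ^2/(1+2*σ*L)*(astar - l) := by
    have hγσ : σ/(1+t) ≤ σ := by
      rw [div_le_iff₀ h1t]; nlinarith
    have hcoeff : 2*σ ≤ 2*(σ/((1+2*σ*L)*(1+σ*L))) + 6*L*σ^2/(1+2*σ*L) := by
      have hdiff : 2*(σ/((1+2*σ*L)*(1+σ*L))) + 6*L*σ^2/(1+2*σ*L) - 2*σ
          = 2*L^2*σ^3/((1+2*σ*L)*(1+σ*L)) := by field_simp; ring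
      nlinarith [hdiff, div_nonneg (by positivity : (0:ℝ) ≤ 2*L^2*σ^3) hD.le]
    have hst : 0 ≤ astar - l := by linarith
    calc 2*(σ/(1+t))*(astar - l) ≤ 2*σ*(astar - l) :=
          mul_le_mul_of_nonneg_right (by linarith) hst
      _ ≤ (2*(σ/((1+2*σ*L)*(1+σ*L))) + 6*L*σ^2/(1+2*σ*L))*(astar - l) :=
          mul_le_mul_of_nonneg_right hcoeff hst
      _ = _ := by ring
  calc (σ/(1+t))^2 * h - 2*(σ/(1+t))*(a - astar)
      = ((σ/(1+t))^2 * h - 2*(σ/(1+t))*(a - l)) + 2*(σ/(1+t))*(astar - l) := by ring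
    _ ≤ (-2*(σ/((1+2*σ*L)*(1+σ*L)))*(a - l) + 2*σ^2*L*m/((1+2*σ*L)*(1+σ*L))*l)
        + (2*(σ/((1+2*σ*L)*(1+σ*L)))*(astar - l) + 6*L*σ^2/(1+2*σ*L)*(astar - l)) := by
        linarith
    _ = -2*(σ/((1+2*σ*L)*(1+σ*L)))*(a - astar) + 6*L*σ^2/(1+2*σ*L)*(astar - l)
        + 2*σ^2*L*m/((1+2*σ*L)*(1+σ*L))*l := by ring

section Analysis
variable {d : ℕ}

local notation "E" => EuclideanSpace ℝ (Fin d)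

lemma inner_grad_eq (f : E → ℝ) (hf : Differentiable ℝ f) (p v : E) :
    ⟪gradient f p, v⟫ = fderiv ℝ f p v := by
  rw [gradient, InnerProductSpace.toDual_symm_apply]

lemma myLineDeriv (f : E → ℝ) (hf : Differentiable ℝ f) (x v : E) (s : ℝ) :
    HasDerivAt (fun s : ℝ => f (x + s • v)) ⟪gradient f (x + s • v), v⟫ s := by
  have hline : HasDerivAt (fun s : ℝ => x + s • v) v s := by
    simpa using ((hasDerivAt_id s).smul_const v).const_add x
  have hR := (hf (x + s • v)).hasFDerivAt.comp_hasDerivAt s hline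
  rw [inner_grad_eq f hf]
  exact hR

/-- gradient inequality for convex functions -/
lemma convex_grad_ineq (f : E → ℝ) (hf : Differentiable ℝ f)
    (hconv : ConvexOn ℝ Set.univ f) (x y : E) :
    f x + ⟪gradient f x, y - x⟫ ≤ f y := by
  set v := y - x with hv
  have hg : ConvexOn ℝ Set.univ (fun s : ℝ => f (x + s • v)) := by
    have hA := hconv.comp_affineMap (AffineMap.lineMap x (x + v) : ℝ →ᵃ[ℝ] E)
    simp only [Set.preimage_univ] at hA
    have hfun : (fun s : ℝ => f (x + s • v)) = f ∘ (AffineMap.lineMap x (x + v) : ℝ →ᵃ[ℝ] E) := by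
      funext s
      simp [AffineMap.lineMap_apply, add_comm]
    rw [hfun]; exact hA
  have hd := myLineDeriv f hf x v 0
  simp only [zero_smul, add_zero] at hd
  have hslope := hg.le_slope_of_hasDerivAt (Set.mem_univ (0:ℝ)) (Set.mem_univ (1:ℝ))
    one_pos hd
  rw [slope_def_field] at hslope
  simp only [zero_smul, add_zero, one_smul, sub_zero, div_one] at hslope
  have : x + v = y := by rw [hv]; abel
  rw [this] at hslope
  linarith

/-- descent lemma -/
lemma descent_lemma (f : E → ℝ) (L : ℝ) (hL : 0 < L) (hf : Differentiable ℝ f)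
    (hsmooth : ∀ x y, ‖gradient f x - gradient f y‖ ≤ L * ‖x - y‖) (x y : E) :
    f y ≤ f x + ⟪gradient f x, y - x⟫ + L / 2 * ‖y - x‖ ^ 2 := by
  set v := y - x with hv
  set ψ : ℝ → ℝ := fun s => f (x + s • v) - s * ⟪gradient f x, v⟫ - s ^ 2 * (L / 2 * ‖v‖ ^ 2)
    with hψ
  have hder : ∀ s : ℝ, HasDerivAt ψ
      (⟪gradient f (x + s • v), v⟫ - ⟪gradient f x, v⟫ - 2 * s * (L / 2 * ‖v‖ ^ 2)) s := by
    intro s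
    have h1 := myLineDeriv f hf x v s
    have h2 : HasDerivAt (fun s : ℝ => s * ⟪gradient f x, v⟫) ⟪gradient f x, v⟫ s := by
      simpa using (hasDerivAt_id s).mul_const ⟪gradient f x, v⟫
    have h3 : HasDerivAt (fun s : ℝ => s ^ 2 * (L / 2 * ‖v‖ ^ 2))
        (2 * s * (L / 2 * ‖v‖ ^ 2)) s := by
      simpa using (hasDerivAt_pow 2 s).mul_const (L / 2 * ‖v‖ ^ 2)
    exact (h1.sub h2).sub h3
  have hanti : AntitoneOn ψ (Set.Icc (0:ℝ) 1) := by
    apply antitoneOn_of_deriv_nonpos (convex_Icc 0 1)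
    · exact Continuous.continuousOn (by
        have : Differentiable ℝ ψ := fun s => (hder s).differentiableAt
        exact this.continuous)
    · exact (fun s _ => ((hder s).differentiableAt).differentiableWithinAt)
    · intro s hs
      rw [interior_Icc, Set.mem_Ioo] at hs
      rw [(hder s).deriv]
      have hcs : ⟪gradient f (x + s • v) - gradient f x, v⟫ ≤ L * s * ‖v‖ ^ 2 := by
        calc ⟪gradient f (x + s • v) - gradient f x, v⟫
            ≤ ‖gradient f (x + s • v) - gradient f x‖ * ‖v‖ := real_inner_le_norm _ _
          _ ≤ (L * ‖(x + s • v) - x‖) * ‖v‖ := by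
              apply mul_le_mul_of_nonneg_right (hsmooth _ _) (norm_nonneg v)
          _ = L * s * ‖v‖ ^ 2 := by
              rw [add_sub_cancel_left, norm_smul, Real.norm_eq_abs, abs_of_pos hs.1]; ring
      rw [inner_sub_left] at hcs
      nlinarith [hcs]
  have h01 := hanti (Set.mem_Icc.2 ⟨le_refl 0, zero_le_one⟩)
    (Set.mem_Icc.2 ⟨zero_le_one, le_refl 1⟩) zero_le_one
  simp only [hψ, zero_smul, add_zero, zero_mul, sub_zero, one_smul, one_mul, one_pow,
    zero_pow, ne_eq, OfNat.ofNat_ne_zero, not_false_eq_true] at h01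
  have hxy : x + v = y := by rw [hv]; abel
  rw [hxy] at h01
  linarith

/-- norm squared gradient bound for lower-bounded smooth functions -/
lemma grad_sq_le (f : E → ℝ) (L : ℝ) (hL : 0 < L) (hf : Differentiable ℝ f)
    (hsmooth : ∀ x y, ‖gradient f x - gradient f y‖ ≤ L * ‖x - y‖)
    (ℓ : ℝ) (hℓ : ∀ z, ℓ ≤ f z) (x : E) :
    ‖gradient f x‖ ^ 2 ≤ 2 * L * (f x - ℓ) := by
  have hd := descent_lemma f L hL hf hsmooth x (x - L⁻¹ • gradient f x)
  have he : (x - L⁻¹ • gradient f x) - x = -(L⁻¹ • gradient f x) := by abel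
  rw [he] at hd
  rw [inner_neg_right, real_inner_smul_right, real_inner_self_eq_norm_sq, norm_neg,
    norm_smul, Real.norm_eq_abs, abs_of_pos (inv_pos.2 hL)] at hd
  have h2 := hℓ (x - L⁻¹ • gradient f x)
  have hLne : L ≠ 0 := ne_of_gt hL
  have : L⁻¹ * ‖gradient f x‖ ^ 2 - L / 2 * (L⁻¹ * ‖gradient f x‖) ^ 2
      = ‖gradient f x‖ ^ 2 / (2 * L) := by field_simp; ring
  have key : ‖gradient f x‖ ^ 2 / (2 * L) ≤ f x - ℓ := by linarith
  rw [div_le_iff₀ (by linarith : (0:ℝ) < 2 * L)] at key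
  linarith

end Analysis

/-- One step of the stochastic NGN method on component `i` with parameter `σ`. -/
noncomputable def ngnStep {d N : ℕ} (f : Fin N → EuclideanSpace ℝ (Fin d) → ℝ) (σ : ℝ)
    (i : Fin N) (x : EuclideanSpace ℝ (Fin d)) : EuclideanSpace ℝ (Fin d) :=
  x - (σ / (1 + σ / (2 * f i x) * ‖gradient (f i) x‖ ^ 2)) • gradient (f i) x

/-- Trajectory of the stochastic NGN iteration. -/
noncomputable def ngnTraj {d N : ℕ} (f : Fin N → EuclideanSpace ℝ (Fin d) → ℝ) (σ : ℕ → ℝ)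
    (x0 : EuclideanSpace ℝ (Fin d)) (ω : ℕ → Fin N) : ℕ → EuclideanSpace ℝ (Fin d)
  | 0 => x0
  | k + 1 => ngnStep f (σ k) (ω k) (ngnTraj f σ x0 ω k)

/-- Extend a finite index sequence to all of `ℕ`. -/
def extendSeq {N K : ℕ} (hN : 0 < N) (ω : Fin K → Fin N) (n : ℕ) : Fin N :=
  if h : n < K then ω ⟨n, h⟩ else ⟨0, hN⟩


lemma traj_shift {d N : ℕ} (f : Fin N → EuclideanSpace ℝ (Fin d) → ℝ) (σ : ℝ)
    (k : ℕ) (x0 : EuclideanSpace ℝ (Fin d)) (ω : ℕ → Fin N) :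
    ngnTraj f (fun _ => σ) x0 ω (k+1)
      = ngnTraj f (fun _ => σ) (ngnStep f σ (ω 0) x0) (fun n => ω (n+1)) k := by
  induction k with
  | zero => rfl
  | succ k ih =>
      show ngnStep f σ (ω (k+1)) (ngnTraj f (fun _ => σ) x0 ω (k+1)) = _
      rw [ih]; rfl

lemma extend_cons_zero {N k : ℕ} (hN : 0 < N) (i : Fin N) (ν : Fin k → Fin N) :
    extendSeq hN (Fin.cons i ν : Fin (k+1) → Fin N) 0 = i := by
  rw [extendSeq, dif_pos (Nat.succ_pos k)]
  exact @Fin.cons_zero k (fun _ => Fin N) i ν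

lemma extend_cons_succ {N k : ℕ} (hN : 0 < N) (i : Fin N) (ν : Fin k → Fin N) :
    (fun n => extendSeq hN (Fin.cons i ν : Fin (k+1) → Fin N) (n+1)) = extendSeq hN ν := by
  funext n
  simp only [extendSeq]
  rcases lt_or_ge n k with h|h
  · rw [dif_pos (by omega), dif_pos h]
    exact @Fin.cons_succ k (fun _ => Fin N) i ν ⟨n, h⟩
  · rw [dif_neg (by omega), dif_neg (by omega)]

lemma sum_split {N k : ℕ} [NeZero N] (G : (Fin (k+1) → Fin N) → ℝ) :
    ∑ ω : Fin (k+1) → Fin N, G ω = ∑ i : Fin N, ∑ ν : Fin k → Fin N, G (Fin.cons i ν) := by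
  rw [← Equiv.sum_comp (Fin.consEquiv (fun _ : Fin (k+1) => Fin N)) G, Fintype.sum_prod_type]
  rfl


set_option maxHeartbeats 2000000

/-- Linear convergence of stochastic NGN in the strongly convex case:
for every `k`, `E‖x^k − x*‖² ≤ (1 − μρ)^k ‖x⁰ − x*‖² + (6L/μ)σ(1+σL)Δ_int
+ (2σL/μ) max{0, 2σL−1} Δ_pos`, with `ρ = σ/((1+2σL)(1+σL))`.  The expectation over
the i.i.d. uniform index sequence is written as the average over all `ω : Fin k → Fin N`. -/
theorem ngn_stochastic_strongly_convex_rate {d N : ℕ} (hN : 0 < N)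
    (f : Fin N → EuclideanSpace ℝ (Fin d) → ℝ) (L σ μ : ℝ)
    (hL : 0 < L) (hσ : 0 < σ) (hμ : 0 < μ)
    (hdiff : ∀ i, Differentiable ℝ (f i))
    (hpos : ∀ i x, 0 < f i x)
    (hsmooth : ∀ i x y, ‖gradient (f i) x - gradient (f i) y‖ ≤ L * ‖x - y‖)
    (hconv : ∀ i, ConvexOn ℝ Set.univ (f i))
    (fbar : EuclideanSpace ℝ (Fin d) → ℝ)
    (hfbar : ∀ z, fbar z = (N : ℝ)⁻¹ * ∑ i, f i z)
    (hsc : ∀ x y : EuclideanSpace ℝ (Fin d),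
      fbar y + ⟪gradient fbar y, x - y⟫ + μ / 2 * ‖x - y‖ ^ 2 ≤ fbar x)
    (xstar : EuclideanSpace ℝ (Fin d)) (hmin : ∀ y, fbar xstar ≤ fbar y)
    (x0 : EuclideanSpace ℝ (Fin d)) :
    ∀ k : ℕ,
      (1 / (N : ℝ) ^ k) *
          ∑ ω : Fin k → Fin N,
            ‖ngnTraj f (fun _ => σ) x0 (extendSeq hN ω) k - xstar‖ ^ 2 ≤
        (1 - μ * (σ / ((1 + 2 * σ * L) * (1 + σ * L)))) ^ k * ‖x0 - xstar‖ ^ 2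
          + 6 * L / μ * σ * (1 + σ * L) * ((N : ℝ)⁻¹ * ∑ i, (f i xstar - ⨅ y, f i y))
          + 2 * σ * L / μ * max 0 (2 * σ * L - 1) * ((N : ℝ)⁻¹ * ∑ i, ⨅ y, f i y) := by
  -- abbreviations
  have hNR : (0:ℝ) < (N:ℝ) := Nat.cast_pos.2 hN
  have hNne : (N:ℝ) ≠ 0 := ne_of_gt hNR
  haveI : NeZero N := ⟨hN.ne'⟩
  have hBdd : ∀ i, BddBelow (Set.range (f i)) := by
    intro i; exact ⟨0, by rintro z ⟨y, rfl⟩; exact (hpos i y).le⟩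
  have hl0 : ∀ i, 0 ≤ ⨅ y, f i y := fun i => le_ciInf fun y => (hpos i y).le
  have hlle : ∀ i z, (⨅ y, f i y) ≤ f i z := fun i z => ciInf_le (hBdd i) z
  set ρ : ℝ := σ / ((1 + 2 * σ * L) * (1 + σ * L)) with hρdef
  set q : ℝ := 1 - μ * ρ with hqdef
  set Δint : ℝ := (N : ℝ)⁻¹ * ∑ i, (f i xstar - ⨅ y, f i y) with hΔintdef
  set Δpos : ℝ := (N : ℝ)⁻¹ * ∑ i, ⨅ y, f i y with hΔposdef
  set m : ℝ := max 0 (2 * σ * L - 1) with hmdef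
  set C1 : ℝ := 6 * L * σ ^ 2 / (1 + 2 * σ * L) with hC1def
  set C2 : ℝ := 2 * σ ^ 2 * L * m / ((1 + 2 * σ * L) * (1 + σ * L)) with hC2def
  set c : ℝ := C1 * Δint + C2 * Δpos with hcdef
  have hu : 0 < σ * L := mul_pos hσ hL
  have hD : (0:ℝ) < (1 + 2 * σ * L) * (1 + σ * L) := by nlinarith
  have hD1 : (0:ℝ) < 1 + 2 * σ * L := by nlinarith
  have hρ0 : 0 < ρ := div_pos hσ hD
  have hm0 : 0 ≤ m := le_max_left _ _
  have hΔint0 : 0 ≤ Δint := by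
    apply mul_nonneg (by positivity)
    exact Finset.sum_nonneg fun i _ => sub_nonneg.2 (hlle i xstar)
  have hΔpos0 : 0 ≤ Δpos := by
    apply mul_nonneg (by positivity)
    exact Finset.sum_nonneg fun i _ => hl0 i
  have hC10 : 0 ≤ C1 := by positivity
  have hC20 : 0 ≤ C2 := by positivity
  have hc0 : 0 ≤ c := by
    rw [hcdef]; exact add_nonneg (mul_nonneg hC10 hΔint0) (mul_nonneg hC20 hΔpos0)
  -- the trivial case d = 0
  rcases Nat.eq_zero_or_pos d with hd | hd
  · subst hd
    haveI : Subsingleton (EuclideanSpace ℝ (Fin 0)) :=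
      ⟨fun a b => by ext i; exact i.elim0⟩
    intro k
    have hz : ∀ z w : EuclideanSpace ℝ (Fin 0), ‖z - w‖ ^ 2 = 0 := by
      intro z w; rw [Subsingleton.elim z w, sub_self, norm_zero]; norm_num
    have hLHS : (1 / (N : ℝ) ^ k) * ∑ ω : Fin k → Fin N,
        ‖ngnTraj f (fun _ => σ) x0 (extendSeq hN ω) k - xstar‖ ^ 2 = 0 := by
      rw [Finset.sum_congr rfl fun ω _ => hz _ _, Finset.sum_const, smul_zero, mul_zero]
    rw [hLHS, hz x0 xstar, mul_zero]
    have h1 : 0 ≤ 6 * L / μ * σ * (1 + σ * L) * Δint := by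
      apply mul_nonneg _ hΔint0; positivity
    have h2 : 0 ≤ 2 * σ * L / μ * m * Δpos := by
      apply mul_nonneg (mul_nonneg (by positivity) hm0) hΔpos0
    linarith
  -- the main case d > 0
  -- gradient facts for fbar
  have hfbarfun : fbar = fun z => (N : ℝ)⁻¹ * ∑ i, f i z := funext hfbar
  have hbar_diff : Differentiable ℝ fbar := by
    rw [hfbarfun]
    exact (Differentiable.fun_sum fun i _ => hdiff i).const_mul _
  have hdsum : ∀ x, fderiv ℝ fbar x = (N:ℝ)⁻¹ • ∑ i, fderiv ℝ (f i) x := by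
    intro x
    rw [hfbarfun]
    rw [fderiv_const_mul (by exact DifferentiableAt.fun_sum fun i _ => (hdiff i).differentiableAt)]
    rw [fderiv_fun_sum fun i _ => (hdiff i).differentiableAt]
  have hgradbar : ∀ x, gradient fbar x = (N:ℝ)⁻¹ • ∑ i, gradient (f i) x := by
    intro x
    unfold gradient
    rw [hdsum x, map_smul, map_sum]
  have hgrad0 : gradient fbar xstar = 0 := by
    have hloc : IsLocalMin fbar xstar := Filter.Eventually.of_forall hmin
    unfold gradient
    rw [hloc.fderiv_eq_zero, map_zero]
  have hsc2 : ∀ y, μ / 2 * ‖y - xstar‖ ^ 2 ≤ fbar y - fbar xstar := by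
    intro y
    have := hsc y xstar
    rw [hgrad0, inner_zero_left] at this
    linarith
  have hbarsmooth : ∀ x y, ‖gradient fbar x - gradient fbar y‖ ≤ L * ‖x - y‖ := by
    intro x y
    rw [hgradbar x, hgradbar y, ← smul_sub, ← Finset.sum_sub_distrib]
    rw [norm_smul, Real.norm_eq_abs, abs_of_nonneg (by positivity)]
    calc (N:ℝ)⁻¹ * ‖∑ i, (gradient (f i) x - gradient (f i) y)‖
        ≤ (N:ℝ)⁻¹ * ∑ i, ‖gradient (f i) x - gradient (f i) y‖ := by
          apply mul_le_mul_of_nonneg_left (norm_sum_le _ _) (by positivity)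
      _ ≤ (N:ℝ)⁻¹ * ∑ _i : Fin N, L * ‖x - y‖ := by
          apply mul_le_mul_of_nonneg_left (Finset.sum_le_sum fun i _ => hsmooth i x y)
            (by positivity)
      _ = L * ‖x - y‖ := by
          rw [Finset.sum_const, Finset.card_univ, Fintype.card_fin, nsmul_eq_mul]
          field_simp
  -- μ ≤ 2L hence 0 ≤ q
  have hμL : μ ≤ 2 * L := by
    set y : EuclideanSpace ℝ (Fin d) := xstar + EuclideanSpace.single ⟨0, hd⟩ (1:ℝ) with hy
    have hny : ‖y - xstar‖ = 1 := by
      rw [hy, add_sub_cancel_left, EuclideanSpace.norm_single, norm_one]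
    have hub := descent_lemma fbar L hL hbar_diff hbarsmooth xstar y
    rw [hgrad0, inner_zero_left, hny] at hub
    have hlb := hsc2 y
    rw [hny] at hlb
    norm_num at hub hlb
    linarith
  have hq0 : 0 ≤ q := by
    rw [hqdef, hρdef]
    have h2 : μ * σ ≤ (1 + 2 * σ * L) * (1 + σ * L) := by
      nlinarith [mul_le_mul_of_nonneg_right hμL hσ.le]
    have h1 : μ * (σ / ((1 + 2 * σ * L) * (1 + σ * L))) ≤ 1 := by
      rw [mul_div_assoc']
      exact (div_le_one hD).2 h2
    linarith
  have hq1 : q < 1 := by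
    rw [hqdef]
    nlinarith [mul_pos hμ hρ0]
  -- per-step expectation bound
  have hstep : ∀ y : EuclideanSpace ℝ (Fin d),
      ∑ i, ‖ngnStep f σ i y - xstar‖ ^ 2 ≤ (N:ℝ) * (q * ‖y - xstar‖ ^ 2 + c) := by
    intro y
    have hi : ∀ i : Fin N, ‖ngnStep f σ i y - xstar‖ ^ 2
        ≤ ‖y - xstar‖ ^ 2 - 2 * ρ * (f i y - f i xstar)
          + C1 * (f i xstar - ⨅ z, f i z) + C2 * (⨅ z, f i z) := by
      intro i
      set g : EuclideanSpace ℝ (Fin d) := gradient (f i) y with hg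
      set γ : ℝ := σ / (1 + σ / (2 * f i y) * ‖g‖ ^ 2) with hγ
      have hexp : ‖ngnStep f σ i y - xstar‖ ^ 2
          = ‖y - xstar‖ ^ 2 - 2 * (γ * ⟪g, y - xstar⟫) + γ ^ 2 * ‖g‖ ^ 2 := by
        rw [ngnStep, sub_right_comm]
        rw [@norm_sub_sq_real (EuclideanSpace ℝ (Fin d)) _ _ (y - xstar) (γ • g)]
        rw [real_inner_smul_right, real_inner_comm, norm_smul, Real.norm_eq_abs, mul_pow,
          sq_abs]
      have hcore := core L σ (f i y) (f i xstar) (⨅ z, f i z) (‖g‖ ^ 2) hL hσ (hpos i y)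
        (hl0 i) (hlle i y) (hlle i xstar) (sq_nonneg _)
        (grad_sq_le (f i) L hL (hdiff i) (fun a b => hsmooth i a b) (⨅ z, f i z)
          (fun z => hlle i z) y)
      have hγ0 : 0 ≤ γ := by
        rw [hγ]
        have h2a : (0:ℝ) < 2 * f i y := by linarith [hpos i y]
        have hnn : 0 ≤ σ / (2 * f i y) * ‖g‖ ^ 2 :=
          mul_nonneg (div_nonneg hσ.le h2a.le) (sq_nonneg _)
        exact div_nonneg hσ.le (by linarith)
      have hconvi : f i y - f i xstar ≤ ⟪g, y - xstar⟫ := by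
        have := convex_grad_ineq (f i) (hdiff i) (hconv i) y xstar
        have hneg : (xstar - y) = -(y - xstar) := by abel
        rw [hneg, inner_neg_right, ← hg] at this
        linarith
      have hmono : -2 * (γ * ⟪g, y - xstar⟫) ≤ -2 * (γ * (f i y - f i xstar)) := by
        have := mul_le_mul_of_nonneg_left hconvi hγ0
        linarith
      rw [hexp, hC1def, hC2def, hmdef]
      linarith [hcore, hmono]
    calc ∑ i, ‖ngnStep f σ i y - xstar‖ ^ 2
        ≤ ∑ i, (‖y - xstar‖ ^ 2 - 2 * ρ * (f i y - f i xstar)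
            + C1 * (f i xstar - ⨅ z, f i z) + C2 * (⨅ z, f i z)) :=
          Finset.sum_le_sum fun i _ => hi i
      _ = (N:ℝ) * ‖y - xstar‖ ^ 2 - 2 * ρ * ((∑ i, f i y) - ∑ i, f i xstar)
            + C1 * (∑ i, (f i xstar - ⨅ z, f i z)) + C2 * (∑ i, ⨅ z, f i z) := by
          rw [Finset.sum_add_distrib, Finset.sum_add_distrib, Finset.sum_sub_distrib,
            ← Finset.mul_sum, ← Finset.mul_sum, ← Finset.mul_sum, Finset.sum_sub_distrib,
            Finset.sum_const, Finset.card_univ, Fintype.card_fin, nsmul_eq_mul]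
      _ ≤ (N:ℝ) * (q * ‖y - xstar‖ ^ 2 + c) := by
          have h1 : (N:ℝ) * (μ / 2 * ‖y - xstar‖ ^ 2) ≤ (∑ i, f i y) - ∑ i, f i xstar := by
            have e1 : (∑ i, f i y) = (N:ℝ) * fbar y := by rw [hfbar y]; field_simp
            have e2 : (∑ i, f i xstar) = (N:ℝ) * fbar xstar := by rw [hfbar xstar]; field_simp
            rw [e1, e2, ← mul_sub]
            exact mul_le_mul_of_nonneg_left (hsc2 y) hNR.le
          have h2 : 2 * ρ * ((N:ℝ) * (μ / 2 * ‖y - xstar‖ ^ 2))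
              ≤ 2 * ρ * ((∑ i, f i y) - ∑ i, f i xstar) :=
            mul_le_mul_of_nonneg_left h1 (by positivity)
          have e3 : (∑ i, (f i xstar - ⨅ z, f i z)) = (N:ℝ) * Δint := by
            rw [hΔintdef]; field_simp
          have e4 : (∑ i, ⨅ z, f i z) = (N:ℝ) * Δpos := by
            rw [hΔposdef]; field_simp
          rw [e3, e4, hcdef, hqdef]
          ring_nf
          ring_nf at h2
          linarith [h2]
  -- main induction
  have main : ∀ (k : ℕ) (z : EuclideanSpace ℝ (Fin d)),
      ∑ ω : Fin k → Fin N, ‖ngnTraj f (fun _ => σ) z (extendSeq hN ω) k - xstar‖ ^ 2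
        ≤ (N:ℝ) ^ k * (q ^ k * ‖z - xstar‖ ^ 2 + c * ∑ j ∈ Finset.range k, q ^ j) := by
    intro k
    induction k with
    | zero =>
        intro z
        simp [ngnTraj]
    | succ k ih =>
        intro z
        rw [sum_split (G := fun ω =>
          ‖ngnTraj f (fun _ => σ) z (extendSeq hN ω) (k+1) - xstar‖ ^ 2)]
        have hrw : ∀ (i : Fin N) (ν : Fin k → Fin N),
            ngnTraj f (fun _ => σ) z (extendSeq hN (Fin.cons i ν)) (k+1)
              = ngnTraj f (fun _ => σ) (ngnStep f σ i z) (extendSeq hN ν) k := by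
          intro i ν
          rw [traj_shift, extend_cons_zero, extend_cons_succ]
        calc ∑ i : Fin N, ∑ ν : Fin k → Fin N,
              ‖ngnTraj f (fun _ => σ) z (extendSeq hN (Fin.cons i ν)) (k+1) - xstar‖ ^ 2
            = ∑ i : Fin N, ∑ ν : Fin k → Fin N,
              ‖ngnTraj f (fun _ => σ) (ngnStep f σ i z) (extendSeq hN ν) k - xstar‖ ^ 2 := by
              exact Finset.sum_congr rfl fun i _ => Finset.sum_congr rfl fun ν _ => by
                rw [hrw i ν]
          _ ≤ ∑ i : Fin N, (N:ℝ) ^ k * (q ^ k * ‖ngnStep f σ i z - xstar‖ ^ 2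
                + c * ∑ j ∈ Finset.range k, q ^ j) :=
              Finset.sum_le_sum fun i _ => ih (ngnStep f σ i z)
          _ = (N:ℝ) ^ k * q ^ k * (∑ i, ‖ngnStep f σ i z - xstar‖ ^ 2)
                + (N:ℝ) * ((N:ℝ) ^ k * (c * ∑ j ∈ Finset.range k, q ^ j)) := by
              simp only [mul_add, Finset.sum_add_distrib, ← Finset.mul_sum, Finset.sum_const,
                Finset.card_univ, Fintype.card_fin, nsmul_eq_mul]
              ring
          _ ≤ (N:ℝ) ^ k * q ^ k * ((N:ℝ) * (q * ‖z - xstar‖ ^ 2 + c))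
                + (N:ℝ) * ((N:ℝ) ^ k * (c * ∑ j ∈ Finset.range k, q ^ j)) := by
              have hnn : (0:ℝ) ≤ (N:ℝ) ^ k * q ^ k :=
                mul_nonneg (by positivity) (pow_nonneg hq0 k)
              have := mul_le_mul_of_nonneg_left (hstep z) hnn
              linarith
          _ = (N:ℝ) ^ (k+1) * (q ^ (k+1) * ‖z - xstar‖ ^ 2
                + c * ∑ j ∈ Finset.range (k+1), q ^ j) := by
              rw [Finset.sum_range_succ]
              ring
  -- conclusion
  intro k
  have hmain := main k x0
  have hgeo : (∑ j ∈ Finset.range k, q ^ j) ≤ 1 / (μ * ρ) := by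
    rw [le_div_iff₀ (mul_pos hμ hρ0)]
    have hgs := geom_sum_mul q k
    have hqk : 0 ≤ q ^ k := pow_nonneg hq0 k
    have : (∑ j ∈ Finset.range k, q ^ j) * (q - 1) = q ^ k - 1 := hgs
    have hμρ : q - 1 = -(μ * ρ) := by rw [hqdef]; ring
    rw [hμρ] at this
    nlinarith [this, hqk]
  calc (1 / (N : ℝ) ^ k) * ∑ ω : Fin k → Fin N,
        ‖ngnTraj f (fun _ => σ) x0 (extendSeq hN ω) k - xstar‖ ^ 2
      ≤ (1 / (N : ℝ) ^ k) * ((N:ℝ) ^ k * (q ^ k * ‖x0 - xstar‖ ^ 2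
          + c * ∑ j ∈ Finset.range k, q ^ j)) :=
        mul_le_mul_of_nonneg_left hmain (by positivity)
    _ = q ^ k * ‖x0 - xstar‖ ^ 2 + c * ∑ j ∈ Finset.range k, q ^ j := by
        field_simp
    _ ≤ q ^ k * ‖x0 - xstar‖ ^ 2 + c * (1 / (μ * ρ)) := by
        have := mul_le_mul_of_nonneg_left hgeo hc0
        linarith
    _ = q ^ k * ‖x0 - xstar‖ ^ 2 + 6 * L / μ * σ * (1 + σ * L) * Δint
          + 2 * σ * L / μ * m * Δpos := by
        rw [hcdef, hC1def, hC2def, hρdef]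
        field_simp
        ring
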